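/- (Convergence of level sets under epi-convergence, Colesanti–Ludwig–Mussnig) Let u : ℝⁿ → ℝ ∪ {+∞} be a lower semicontinuous convex function with u(x) → +∞ as |x| → +∞, and let u_n : ℝⁿ → ℝ ∪ {+∞} be lower semicontinuous convex functions with u_n(x) → +∞ as |x| → +∞ for each n, such that u_n epi-converges to u. Then for every t ≠ min_{x∈ℝⁿ} u(x), the sublevel sets {u_n ≤ t} converge to {u ≤ t} in Hausdorff distance. -/

import Mathlib

/-!
Epi-convergence gives the two halves of Kuratowski convergence of the sublevel sets
`A_m = {u_m ≤ t}` to `K = {u ≤ t}`: limits of points of the `A_m` lie in `K`, and every point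
where `u < t` is a limit of points of the `A_m`. For `t > min u`, convexity of `u` makes
`{u < t}` dense in `K`, so the second half holds on all of `K`, and uniformly because the
coercive sublevel set `K` is totally bounded. The first half is uniform once the `A_m`
stay in a fixed compact set: taking a ball `B ⊇ K`, the convex sets `A_m` eventually meet `B`
but miss its boundary sphere (which is compact and disjoint from `K`), so `A_m ⊆ B`.
Both uniform halves together are Hausdorff convergence.
-/

open Filter

/-- Painlevé–Kuratowski convergence of a sequence of sets: every point of the limit is a
limit of a sequence of points of the `A_n`, and every limit of points along a subsequence
belongs to the limit set. -/
def PKConv {X : Type*} [TopologicalSpace X] (A : ℕ → Set X) (L : Set X) : Prop :=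
  (∀ x ∈ L, ∃ y : ℕ → X, (∀ m, y m ∈ A m) ∧ Tendsto y atTop (nhds x)) ∧
    (∀ (φ : ℕ → ℕ) (y : ℕ → X), StrictMono φ → (∀ m, y m ∈ A (φ m)) →
      ∀ x : X, Tendsto y atTop (nhds x) → x ∈ L)

/-- Epigraph of an extended-real-valued function. -/
def epiSet {n : ℕ} (u : EuclideanSpace ℝ (Fin n) → EReal) :
    Set (EuclideanSpace ℝ (Fin n) × ℝ) :=
  {p | u p.1 ≤ (p.2 : EReal)}

open Metric Set Topology

section Kuratowski

def KuratowskiLimsupSubset {X : Type*} [TopologicalSpace X] (A : ℕ → Set X) (L : Set X) :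
    Prop :=
  ∀ (φ : ℕ → ℕ) (z : ℕ → X), StrictMono φ → (∀ k, z k ∈ A (φ k)) →
    ∀ x, Tendsto z atTop (𝓝 x) → x ∈ L

def MemKuratowskiLiminf {X : Type*} [PseudoMetricSpace X] (A : ℕ → Set X) (x : X) : Prop :=
  ∀ ε > 0, ∀ᶠ m in atTop, ∃ z ∈ A m, dist z x < ε

theorem eventually_disjoint_of_isCompact {X : Type*} [TopologicalSpace X]
    [FirstCountableTopology X] {A : ℕ → Set X} {L : Set X}
    (hup : KuratowskiLimsupSubset A L)
    {C : Set X} (hC : IsCompact C) (hCL : Disjoint C L) :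
    ∀ᶠ m in atTop, Disjoint (A m) C := by
  by_contra h
  obtain ⟨φ, hφ, hmeet⟩ := extraction_of_frequently_atTop (not_eventually.1 h)
  choose z hzA hzC using fun k => not_disjoint_iff.1 (hmeet k)
  obtain ⟨x, hxC, ψ, hψ, hzx⟩ := hC.tendsto_subseq hzC
  exact hCL.notMem_of_mem_left hxC
    (hup (φ ∘ ψ) (z ∘ ψ) (hφ.comp hψ) (fun k => hzA (ψ k)) x hzx)

variable {X : Type*} [PseudoMetricSpace X] {A : ℕ → Set X} {L : Set X}

theorem eventually_forall_exists_dist_lt_of_isCompact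
    (hup : KuratowskiLimsupSubset A L)
    {C : Set X} (hC : IsCompact C) (hAC : ∀ᶠ m in atTop, A m ⊆ C) {ε : ℝ} (hε : 0 < ε) :
    ∀ᶠ m in atTop, ∀ z ∈ A m, ∃ y ∈ L, dist z y < ε := by
  have hdisj : Disjoint (C \ thickening ε L) L :=
    disjoint_sdiff_left.mono_right (self_subset_thickening hε L)
  filter_upwards [eventually_disjoint_of_isCompact hup (hC.diff isOpen_thickening) hdisj, hAC]
    with m hm hmC z hz
  by_contra hzL
  exact hm.notMem_of_mem_left hz ⟨hmC hz, fun h => hzL (mem_thickening_iff.1 h)⟩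

theorem memKuratowskiLiminf_of_mem_closure {D : Set X}
    (hD : ∀ p ∈ D, MemKuratowskiLiminf A p) {x : X}
    (hx : x ∈ closure D) : MemKuratowskiLiminf A x := by
  intro ε hε
  obtain ⟨p, hp, hxp⟩ := Metric.mem_closure_iff.1 hx (ε / 2) (half_pos hε)
  filter_upwards [hD p hp (ε / 2) (half_pos hε)] with m ⟨z, hz, hzp⟩
  refine ⟨z, hz, ?_⟩
  calc dist z x ≤ dist z p + dist x p := dist_triangle_right z x p
    _ < ε / 2 + ε / 2 := add_lt_add hzp hxp
    _ = ε := add_halves ε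

theorem TotallyBounded.eventually_forall_exists_dist_lt (hL : TotallyBounded L)
    (hlow : ∀ x ∈ L, MemKuratowskiLiminf A x) {ε : ℝ} (hε : 0 < ε) :
    ∀ᶠ m in atTop, ∀ x ∈ L, ∃ z ∈ A m, dist z x < ε := by
  obtain ⟨F, hFL, hF, hLF⟩ := finite_approx_of_totallyBounded hL (ε / 2) (half_pos hε)
  have hnet : ∀ᶠ m in atTop, ∀ p ∈ F, ∃ z ∈ A m, dist z p < ε / 2 :=
    hF.eventually_all.2 fun p hp => hlow p (hFL hp) _ (half_pos hε)
  filter_upwards [hnet] with m hm x hx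
  obtain ⟨p, hp, hxp⟩ := mem_iUnion₂.1 (hLF hx)
  obtain ⟨z, hz, hzp⟩ := hm p hp
  refine ⟨z, hz, ?_⟩
  calc dist z x ≤ dist z p + dist x p := dist_triangle_right z x p
    _ < ε / 2 + ε / 2 := add_lt_add hzp hxp
    _ = ε := add_halves ε

theorem tendsto_hausdorffDist_zero
    (hnear : ∀ ε > 0, ∀ᶠ m in atTop, ∀ z ∈ A m, ∃ y ∈ L, dist z y < ε)
    (hfill : ∀ ε > 0, ∀ᶠ m in atTop, ∀ y ∈ L, ∃ z ∈ A m, dist z y < ε) :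
    Tendsto (fun m => hausdorffDist (A m) L) atTop (𝓝 0) := by
  refine tendsto_order.2 ⟨fun a ha => .of_forall fun m => ha.trans_le hausdorffDist_nonneg,
    fun ε hε => ?_⟩
  filter_upwards [hnear (ε / 2) (half_pos hε), hfill (ε / 2) (half_pos hε)] with m h₁ h₂
  refine (hausdorffDist_le_of_mem_dist (half_pos hε).le ?_ ?_).trans_lt (half_lt_self hε)
  · exact fun z hz => (h₁ z hz).imp fun y ⟨hy, hzy⟩ => ⟨hy, hzy.le⟩
  · exact fun y hy => (h₂ y hy).imp fun z ⟨hz, hzy⟩ => ⟨hz, (dist_comm y z).trans_le hzy.le⟩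

end Kuratowski

theorem eventually_subset_ball_of_convex {E : Type*} [NormedAddCommGroup E] [NormedSpace ℝ E]
    [ProperSpace E] {A : ℕ → Set E} {L : Set E} (hA : ∀ m, Convex ℝ (A m))
    (hup : KuratowskiLimsupSubset A L)
    {R : ℝ} (hLR : L ⊆ ball 0 R) (hmeet : ∀ᶠ m in atTop, (A m ∩ ball 0 R).Nonempty) :
    ∀ᶠ m in atTop, A m ⊆ ball 0 R := by
  have hsphere : Disjoint (sphere (0 : E) R) L := sphere_disjoint_ball.mono_right hLR
  filter_upwards [eventually_disjoint_of_isCompact hup (isCompact_sphere 0 R) hsphere, hmeet]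
    with m hm ⟨q, hqA, hqR⟩ z hz
  by_contra hzR
  have hRz : R ≤ ‖z‖ := not_lt.1 (mt mem_ball_zero_iff.2 hzR)
  obtain ⟨w, hwA, hwR⟩ := (hA m).isPreconnected.intermediate_value hqA hz
    continuous_norm.continuousOn ⟨(mem_ball_zero_iff.1 hqR).le, hRz⟩
  exact hm.notMem_of_mem_left hwA (mem_sphere_zero_iff_norm.2 hwR)

theorem exists_isCompact_sublevel_subset {X : Type*} [TopologicalSpace X] {u : X → EReal}
    (hu : Tendsto u (cocompact X) (𝓝 ⊤)) (t : ℝ) : ∃ C, IsCompact C ∧ {x | u x ≤ t} ⊆ C := by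
  obtain ⟨C, hC, hsub⟩ := mem_cocompact'.1 (hu (Ioi_mem_nhds (EReal.coe_lt_top t)))
  exact ⟨C, hC, fun x hx => hsub (not_lt.2 (show u x ≤ t from hx))⟩

section Epigraph

variable {n : ℕ}

theorem convex_sublevel_of_convex_epiSet {v : EuclideanSpace ℝ (Fin n) → EReal}
    (hv : Convex ℝ (epiSet v)) (t : ℝ) : Convex ℝ {x | v x ≤ t} := by
  intro x hx y hy a b ha hb hab
  simpa [epiSet, ← add_mul, hab] using hv (x := (x, t)) (y := (y, t)) hx hy ha hb hab

theorem sublevel_subset_closure_strictSublevel {v : EuclideanSpace ℝ (Fin n) → EReal}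
    (hv : Convex ℝ (epiSet v)) {t : ℝ} {p : EuclideanSpace ℝ (Fin n)} (hp : v p < t) :
    {x | v x ≤ t} ⊆ closure {x | v x < t} := by
  intro y hy
  obtain ⟨s, hps, hst⟩ := EReal.exists_between_coe_real hp
  have hlt : ∀ θ ∈ Ioc (0 : ℝ) 1, v (AffineMap.lineMap y p θ) < t := by
    rintro θ ⟨hθ0, hθ1⟩
    have hmem : v (AffineMap.lineMap y p θ) ≤ ((1 - θ) * t + θ * s : ℝ) := by
      simpa [epiSet, AffineMap.lineMap_apply_module] using
        hv (x := (y, t)) (y := (p, s)) hy hps.le (sub_nonneg.2 hθ1) hθ0.le (sub_add_cancel 1 θ)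
    refine hmem.trans_lt (EReal.coe_lt_coe_iff.2 ?_)
    nlinarith [EReal.coe_lt_coe_iff.1 hst]
  have htend : Tendsto (fun θ : ℝ => AffineMap.lineMap y p θ) (𝓝[>] 0) (𝓝 y) :=
    (AffineMap.lineMap_continuous.tendsto' 0 y (by simp)).mono_left nhdsWithin_le_nhds
  exact mem_closure_of_tendsto htend
    (by filter_upwards [Ioc_mem_nhdsGT one_pos] with θ hθ using hlt θ hθ)

variable {u : EuclideanSpace ℝ (Fin n) → EReal} {uN : ℕ → EuclideanSpace ℝ (Fin n) → EReal}

theorem PKConv.kuratowskiLimsupSubset_sublevel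
    (hepi : PKConv (fun m => epiSet (uN m)) (epiSet u)) (t : ℝ) :
    KuratowskiLimsupSubset (fun m => {x | uN m x ≤ t}) {x | u x ≤ t} :=
  fun φ z hφ hz x hzx => hepi.2 φ (fun k => (z k, t)) hφ hz (x, t)
    (hzx.prodMk_nhds tendsto_const_nhds)

theorem PKConv.memKuratowskiLiminf_sublevel
    (hepi : PKConv (fun m => epiSet (uN m)) (epiSet u)) {t : ℝ} {p : EuclideanSpace ℝ (Fin n)}
    (hp : u p < t) : MemKuratowskiLiminf (fun m => {x | uN m x ≤ t}) p := by
  intro ε hε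
  obtain ⟨s, hps, hst⟩ := EReal.exists_between_coe_real hp
  obtain ⟨y, hy, hyp⟩ := hepi.1 (p, s) hps.le
  filter_upwards [((continuous_snd.tendsto _).comp hyp).eventually_lt_const
      (EReal.coe_lt_coe_iff.1 hst), ((continuous_fst.tendsto _).comp hyp).eventually
      (ball_mem_nhds p hε)] with m hmt hmp
  exact ⟨(y m).1, (hy m).trans (EReal.coe_le_coe_iff.2 hmt.le), hmp⟩

end Epigraph

theorem sublevel_hausdorff_convergence_of_epiConvergence_general {n : ℕ}
    (u : EuclideanSpace ℝ (Fin n) → EReal) (uN : ℕ → EuclideanSpace ℝ (Fin n) → EReal)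
    (hconv : Convex ℝ (epiSet u))
    (hcoer : Tendsto u (cocompact (EuclideanSpace ℝ (Fin n))) (nhds ⊤))
    (hconvN : ∀ m, Convex ℝ (epiSet (uN m)))
    (hepi : PKConv (fun m => epiSet (uN m)) (epiSet u))
    (t : ℝ) (ht : (t : EReal) ≠ ⨅ x, u x) :
    Tendsto (fun m => Metric.hausdorffDist {x | uN m x ≤ (t : EReal)} {x | u x ≤ (t : EReal)})
      atTop (nhds 0) := by
  rcases eq_empty_or_nonempty {x | u x ≤ (t : EReal)} with hK | ⟨x, hx⟩
  · simp [hK] -- `hausdorffDist s ∅ = 0` by convention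
  obtain ⟨p₀, hp₀⟩ : ∃ p, u p < t := iInf_lt_iff.1 (((iInf_le u x).trans hx).lt_of_ne ht.symm)
  have hup := hepi.kuratowskiLimsupSubset_sublevel t
  have hlow : ∀ y ∈ {x | u x ≤ (t : EReal)},
      MemKuratowskiLiminf (fun m => {x | uN m x ≤ (t : EReal)}) y := fun y hy =>
    memKuratowskiLiminf_of_mem_closure (fun _ hp => hepi.memKuratowskiLiminf_sublevel hp)
      (sublevel_subset_closure_strictSublevel hconv hp₀ hy)
  obtain ⟨C, hC, hKC⟩ := exists_isCompact_sublevel_subset hcoer t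
  obtain ⟨R, hCR⟩ := hC.isBounded.subset_ball 0
  obtain ⟨δ, hδ, hδR⟩ := Metric.isOpen_iff.1 isOpen_ball p₀ (hCR (hKC hp₀.le))
  have hbdd : ∀ᶠ m in atTop, {x | uN m x ≤ (t : EReal)} ⊆ ball 0 R :=
    eventually_subset_ball_of_convex (fun m => convex_sublevel_of_convex_epiSet (hconvN m) t)
      hup (hKC.trans hCR) ((hlow p₀ hp₀.le δ hδ).mono fun _ ⟨z, hz, hzp⟩ => ⟨z, hz, hδR hzp⟩)
  exact tendsto_hausdorffDist_zero
    (fun ε hε => eventually_forall_exists_dist_lt_of_isCompact hup (isCompact_closedBall 0 R)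
      (hbdd.mono fun _ h => h.trans ball_subset_closedBall) hε)
    (fun ε hε => (hC.totallyBounded.subset hKC).eventually_forall_exists_dist_lt hlow hε)

/-- (Colesanti–Ludwig–Mussnig.) If coercive lower semicontinuous convex functions `u_m`
epi-converge to a coercive lower semicontinuous convex function `u`, then for every
`t ≠ min u` the sublevel sets `{u_m ≤ t}` converge to `{u ≤ t}` in Hausdorff distance. -/
theorem sublevel_hausdorff_convergence_of_epiConvergence {n : ℕ}
    (u : EuclideanSpace ℝ (Fin n) → EReal) (uN : ℕ → EuclideanSpace ℝ (Fin n) → EReal)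
    (hlsc : LowerSemicontinuous u) (hconv : Convex ℝ (epiSet u))
    (hcoer : Tendsto u (cocompact (EuclideanSpace ℝ (Fin n))) (nhds ⊤))
    (hlscN : ∀ m, LowerSemicontinuous (uN m)) (hconvN : ∀ m, Convex ℝ (epiSet (uN m)))
    (hcoerN : ∀ m, Tendsto (uN m) (cocompact (EuclideanSpace ℝ (Fin n))) (nhds ⊤))
    (hepi : PKConv (fun m => epiSet (uN m)) (epiSet u))
    (t : ℝ) (ht : (t : EReal) ≠ ⨅ x, u x) :
    Tendsto (fun m => Metric.hausdorffDist {x | uN m x ≤ (t : EReal)} {x | u x ≤ (t : EReal)})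
      atTop (nhds 0) :=
  sublevel_hausdorff_convergence_of_epiConvergence_general u uN hconv hcoer hconvN hepi t ht
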